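/- arXiv:2603.16353 — 3 statements merged into one kernel-verified Lean document; each statement's English description precedes it below -/
import Mathlib

section
/- Let C : R^D → R^D be the sign-bit quantization map defined by C(g) = sign(g) · ‖g‖₁ / D, where sign is applied componentwise and ‖·‖₁ is the ℓ¹ norm. Then for every g ∈ R^D, ‖C(g) − g‖² ≤ (1 − 1/D)‖g‖². -/
/-!
Write `S = ∑ |gⱼ|` and `c = S / D`. Coordinatewise, since `sign(x)² ≤ 1` and `sign(x) x = |x|`,
`(c sign(gⱼ) − gⱼ)² ≤ c² − 2c|gⱼ| + gⱼ²`; summing gives `‖C(g) − g‖² ≤ ‖g‖² − S²/D`, and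
`‖g‖₂ ≤ ‖g‖₁` turns `S²/D` into at least `‖g‖²/D`.
-/

open Finset

namespace Real

lemma sign_sq_le_one (x : ℝ) : sign x ^ 2 ≤ 1 := by
  rcases sign_apply_eq x with h | h | h <;> rw [h] <;> norm_num

lemma sign_mul_self_eq_abs (x : ℝ) : sign x * x = |x| := by
  rcases lt_trichotomy x 0 with h | rfl | h
  · rw [sign_of_neg h, abs_of_neg h, neg_one_mul]
  · simp
  · rw [sign_of_pos h, abs_of_pos h, one_mul]

lemma sq_sign_mul_sub_le (x c : ℝ) : (sign x * c - x) ^ 2 ≤ c ^ 2 - 2 * c * |x| + x ^ 2 := by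
  have hexpand : (sign x * c - x) ^ 2 = sign x ^ 2 * c ^ 2 - 2 * c * (sign x * x) + x ^ 2 := by
    ring
  rw [hexpand, sign_mul_self_eq_abs]
  nlinarith [sign_sq_le_one x, sq_nonneg c]

end Real

lemma sum_sq_le_sq_sum_abs {ι : Type*} (s : Finset ι) (f : ι → ℝ) :
    ∑ i ∈ s, f i ^ 2 ≤ (∑ i ∈ s, |f i|) ^ 2 := by
  simpa only [sq_abs] using sum_sq_le_sq_sum_of_nonneg (s := s) fun i _ => abs_nonneg (f i)

lemma sum_sq_sign_mul_sub_le {ι : Type*} [Fintype ι] (g : ι → ℝ) (c : ℝ) :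
    ∑ j, (Real.sign (g j) * c - g j) ^ 2
      ≤ Fintype.card ι * c ^ 2 - 2 * c * ∑ j, |g j| + ∑ j, g j ^ 2 := by
  calc ∑ j, (Real.sign (g j) * c - g j) ^ 2
      ≤ ∑ j, (c ^ 2 - 2 * c * |g j| + g j ^ 2) :=
        sum_le_sum fun j _ => Real.sq_sign_mul_sub_le (g j) c
    _ = Fintype.card ι * c ^ 2 - 2 * c * ∑ j, |g j| + ∑ j, g j ^ 2 := by
        simp [sum_add_distrib, sum_sub_distrib, mul_sum]

lemma sum_sq_sign_mul_mean_abs_sub_le {ι : Type*} [Fintype ι] (g : ι → ℝ) :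
    ∑ j, (Real.sign (g j) * ((∑ k, |g k|) / Fintype.card ι) - g j) ^ 2
      ≤ (1 - 1 / (Fintype.card ι : ℝ)) * ∑ j, g j ^ 2 := by
  set n : ℝ := (Fintype.card ι : ℝ)
  set S := ∑ k, |g k|
  have hmean : n * (S / n) ^ 2 = S ^ 2 / n := by
    rcases eq_or_ne n 0 with hn | hn
    · simp [hn]
    · field_simp
  have hl2_le_l1 : (∑ j, g j ^ 2) / n ≤ S ^ 2 / n := by
    gcongr
    exact sum_sq_le_sq_sum_abs univ g
  calc ∑ j, (Real.sign (g j) * (S / n) - g j) ^ 2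
      ≤ n * (S / n) ^ 2 - 2 * (S / n) * S + ∑ j, g j ^ 2 := sum_sq_sign_mul_sub_le g (S / n)
    _ = ∑ j, g j ^ 2 - S ^ 2 / n := by rw [hmean]; ring
    _ ≤ ∑ j, g j ^ 2 - (∑ j, g j ^ 2) / n := by linarith
    _ = (1 - 1 / n) * ∑ j, g j ^ 2 := by ring

theorem signbit_quantization_contraction_general (D : ℕ)
    (g : EuclideanSpace ℝ (Fin D)) :
    ‖(show EuclideanSpace ℝ (Fin D) from
        WithLp.toLp 2 (fun j => Real.sign (g j) * (∑ k, |g k|) / (D : ℝ))) - g‖ ^ 2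
      ≤ (1 - 1 / (D : ℝ)) * ‖g‖ ^ 2 := by
  simp only [EuclideanSpace.real_norm_sq_eq, PiLp.sub_apply, mul_div_assoc]
  simpa using sum_sq_sign_mul_mean_abs_sub_le (fun j => g j)

/-- Sign-bit quantization `C(g) = sign(g) ⬝ ‖g‖₁ / D` satisfies
`‖C(g) − g‖² ≤ (1 − 1/D)‖g‖²`. -/
theorem signbit_quantization_contraction (D : ℕ) (hD : 0 < D)
    (g : EuclideanSpace ℝ (Fin D)) :
    ‖(show EuclideanSpace ℝ (Fin D) from
        WithLp.toLp 2 (fun j => Real.sign (g j) * (∑ k, |g k|) / (D : ℝ))) - g‖ ^ 2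
      ≤ (1 - 1 / (D : ℝ)) * ‖g‖ ^ 2 :=
  signbit_quantization_contraction_general D g
end

section
/- Under a pairwise balanced allocation, let S ∈ {0,1}^{N×M} be an allocation matrix with column sums ∑_{i=1}^N s(i,k) = d_k for all k and ∑_{i=1}^N s(i,k₁)s(i,k₂) = d_{k₁}d_{k₂}/N for all k₁ ≠ k₂. For vectors f_1, ..., f_M in R^D, define g_i = ∑_{k : s(i,k)=1} f_k / d_k. Then ∑_{i=1}^N ‖g_i‖² = ∑_{k=1}^M (1/d_k − 1/N)‖f_k‖² + (1/N)‖∑_{k=1}^M f_k‖². -/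
/-!
Expanding each squared norm, both sides become quadratic forms `∑ k₁ k₂, C k₁ k₂ ⟪f k₁, f k₂⟫` in the
Gram matrix of the `f k`. On the left the coefficient is `(∑ i, s i k₁ s i k₂) / (d k₁ d k₂)`; since
`s` is `{0,1}`-valued the diagonal column products are the column sums `d k`, and pairwise balance
makes every off-diagonal coefficient equal to `1 / N`. This is exactly the Gram coefficient of the
right-hand side, `1 / d k` on the diagonal and `1 / N` off it.
-/

open Finset
open scoped InnerProductSpace

section Gram

variable {κ E : Type*} [Fintype κ] [NormedAddCommGroup E] [InnerProductSpace ℝ E]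

theorem norm_sum_smul_sq (c : κ → ℝ) (f : κ → E) :
    ‖∑ k, c k • f k‖ ^ 2 = ∑ k₁, ∑ k₂, c k₁ * c k₂ * ⟪f k₁, f k₂⟫_ℝ := by
  rw [← real_inner_self_eq_norm_sq, sum_inner]
  simp only [inner_sum, real_inner_smul_left, real_inner_smul_right, mul_assoc, mul_left_comm]

theorem sum_norm_sum_smul_sq {ρ : Type*} [Fintype ρ] (c : ρ → κ → ℝ) (f : κ → E) :
    ∑ i, ‖∑ k, c i k • f k‖ ^ 2 = ∑ k₁, ∑ k₂, (∑ i, c i k₁ * c i k₂) * ⟪f k₁, f k₂⟫_ℝ := by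
  simp_rw [norm_sum_smul_sq, sum_mul]
  rw [sum_comm]
  exact sum_congr rfl fun _ _ => sum_comm

theorem sum_gram_diag_add_const [DecidableEq κ] (a : κ → ℝ) (b : ℝ) (f : κ → E) :
    ∑ k₁, ∑ k₂, ((if k₁ = k₂ then a k₁ else 0) + b) * ⟪f k₁, f k₂⟫_ℝ
      = ∑ k, a k * ‖f k‖ ^ 2 + b * ‖∑ k, f k‖ ^ 2 := by
  rw [← real_inner_self_eq_norm_sq (∑ k, f k), sum_inner]
  simp only [add_mul, sum_add_distrib, ite_mul, zero_mul, sum_ite_eq, mem_univ, if_true,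
    real_inner_self_eq_norm_sq, inner_sum, mul_sum]

end Gram

theorem sum_div_mul_div_of_pairwise_balanced {ρ κ : Type*} [Fintype ρ] [DecidableEq κ]
    {s : ρ → κ → ℝ} {d : κ → ℝ} {N : ℝ} (h01 : ∀ i k, s i k = 0 ∨ s i k = 1)
    (hd : ∀ k, d k ≠ 0) (hcol : ∀ k, ∑ i, s i k = d k)
    (hpair : ∀ k₁ k₂, k₁ ≠ k₂ → ∑ i, s i k₁ * s i k₂ = d k₁ * d k₂ / N) (k₁ k₂ : κ) :
    ∑ i, s i k₁ / d k₁ * (s i k₂ / d k₂)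
      = (if k₁ = k₂ then 1 / d k₁ - 1 / N else 0) + 1 / N := by
  simp_rw [div_mul_div_comm, ← sum_div]
  split_ifs with h
  · subst h
    have hsq : ∀ i, s i k₁ * s i k₁ = s i k₁ := fun i => by
      rcases h01 i k₁ with h | h <;> simp [h]
    simp only [hsq, hcol]
    field_simp [hd k₁]
    ring
  · rw [hpair k₁ k₂ h]
    field_simp [hd k₁, hd k₂]
    ring

theorem pairwise_balanced_identity_general (D N M : ℕ)
    (s : Fin N → Fin M → ℝ) (h01 : ∀ i k, s i k = 0 ∨ s i k = 1)
    (d : Fin M → ℝ) (hd : ∀ k, 0 < d k)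
    (hcol : ∀ k, ∑ i, s i k = d k)
    (hpair : ∀ k₁ k₂, k₁ ≠ k₂ → ∑ i, s i k₁ * s i k₂ = d k₁ * d k₂ / (N : ℝ))
    (f : Fin M → EuclideanSpace ℝ (Fin D)) :
    ∑ i, ‖∑ k, (s i k / d k) • f k‖ ^ 2
      = ∑ k, (1 / d k - 1 / (N : ℝ)) * ‖f k‖ ^ 2 + (1 / (N : ℝ)) * ‖∑ k, f k‖ ^ 2 := by
  rw [sum_norm_sum_smul_sq, ← sum_gram_diag_add_const]
  simp_rw [sum_div_mul_div_of_pairwise_balanced h01 (fun k => (hd k).ne') hcol hpair]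

/-- Pairwise balanced allocation identity: with allocation matrix `s ∈ {0,1}^{N×M}`,
column sums `d k`, pairwise balance `∑ i, s i k₁ * s i k₂ = d k₁ d k₂ / N` for `k₁ ≠ k₂`,
and encoded vectors `g i = ∑_{k : s i k = 1} f k / d k`, we have
`∑ i ‖g i‖² = ∑ k (1/d k − 1/N) ‖f k‖² + (1/N) ‖∑ k f k‖²`. -/
theorem pairwise_balanced_identity (D N M : ℕ) (hN : 0 < N)
    (s : Fin N → Fin M → ℝ) (h01 : ∀ i k, s i k = 0 ∨ s i k = 1)
    (d : Fin M → ℝ) (hd : ∀ k, 0 < d k)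
    (hcol : ∀ k, ∑ i, s i k = d k)
    (hpair : ∀ k₁ k₂, k₁ ≠ k₂ → ∑ i, s i k₁ * s i k₂ = d k₁ * d k₂ / (N : ℝ))
    (f : Fin M → EuclideanSpace ℝ (Fin D)) :
    ∑ i, ‖∑ k, (s i k / d k) • f k‖ ^ 2
      = ∑ k, (1 / d k - 1 / (N : ℝ)) * ‖f k‖ ^ 2 + (1 / (N : ℝ)) * ‖∑ k, f k‖ ^ 2 :=
  pairwise_balanced_identity_general D N M s h01 d hd hcol hpair f
end

section
/- Let grouped sign-bit quantization partition {1, ..., D} into M₀ nonempty groups I_1, ..., I_{M₀}, compressing each subvector g_m = (g_j)_{j ∈ I_m} to sign(g_m)·‖g_m‖₁/|I_m| and concatenating. Then for every g ∈ R^D, ‖C(g) − g‖² ≤ δ‖g‖² with δ = 1 − min_{m ∈ {1,...,M₀}} 1/|I_m|. -/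
/-!
On a group of size `n` with `ℓ¹`-mass `S`, the error in each coordinate is at most
`(S / n - |g j|) ^ 2`, since `sign (g j) * (S / n) - g j = sign (g j) * (S / n - |g j|)`
when `g j ≠ 0`.
These sum to `∑ g j ^ 2 - S ^ 2 / n`, and `∑ g j ^ 2 ≤ S ^ 2` gives the factor `1 - 1 / n`.
-/

open Finset

theorem Real.sq_sign_mul_sub_le_s19 (a x : ℝ) : (Real.sign x * a - x) ^ 2 ≤ (a - |x|) ^ 2 := by
  rcases lt_trichotomy x 0 with hx | rfl | hx
  · rw [Real.sign_of_neg hx, abs_of_neg hx]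
    exact le_of_eq (by ring)
  · simpa using sq_nonneg a
  · rw [Real.sign_of_pos hx, abs_of_pos hx]
    simp

variable {ι κ : Type*}

theorem Finset.sum_sq_mean_sub (s : Finset ι) (f : ι → ℝ) :
    ∑ i ∈ s, ((∑ j ∈ s, f j) / #s - f i) ^ 2 = ∑ i ∈ s, f i ^ 2 - (∑ i ∈ s, f i) ^ 2 / #s := by
  rcases s.eq_empty_or_nonempty with rfl | hs
  · simp
  have hcard : (#s : ℝ) ≠ 0 := by positivity
  simp only [sub_sq, sum_add_distrib, sum_sub_distrib, sum_const, nsmul_eq_mul, ← mul_sum]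
  field_simp
  ring

theorem Finset.sum_sq_sign_mul_mean_abs_sub_le (s : Finset ι) (f : ι → ℝ) :
    ∑ i ∈ s, (Real.sign (f i) * (∑ j ∈ s, |f j|) / #s - f i) ^ 2
      ≤ (1 - 1 / #s) * ∑ i ∈ s, f i ^ 2 := by
  calc ∑ i ∈ s, (Real.sign (f i) * (∑ j ∈ s, |f j|) / #s - f i) ^ 2
      ≤ ∑ i ∈ s, ((∑ j ∈ s, |f j|) / #s - |f i|) ^ 2 :=
        sum_le_sum fun i _ => by rw [mul_div_assoc]; exact Real.sq_sign_mul_sub_le_s19 _ _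
    _ = ∑ i ∈ s, f i ^ 2 - (∑ i ∈ s, |f i|) ^ 2 / #s := by
        simp only [sum_sq_mean_sub, sq_abs]
    _ ≤ ∑ i ∈ s, f i ^ 2 - (∑ i ∈ s, f i ^ 2) / #s := by
        gcongr
        simpa only [sq_abs] using sum_sq_le_sq_sum_of_nonneg fun i _ => abs_nonneg (f i)
    _ = (1 - 1 / #s) * ∑ i ∈ s, f i ^ 2 := by ring

theorem Finset.sum_sq_groupwise_sign_mul_mean_abs_sub_le [Fintype ι] [Fintype κ] [DecidableEq κ]
    (P : ι → κ) (f : ι → ℝ) :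
    ∑ j, (Real.sign (f j) * (∑ k with P k = P j, |f k|) / #{k | P k = P j} - f j) ^ 2
      ≤ (1 - ⨅ m, 1 / (#{k | P k = m} : ℝ)) * ∑ j, f j ^ 2 := by
  rw [← sum_fiberwise univ P, ← sum_fiberwise univ P, mul_sum]
  gcongr with m
  calc ∑ j with P j = m, (Real.sign (f j) * (∑ k with P k = P j, |f k|) / #{k | P k = P j}
          - f j) ^ 2
      = ∑ j with P j = m, (Real.sign (f j) * (∑ k with P k = m, |f k|) / #{k | P k = m}
          - f j) ^ 2 :=
        sum_congr rfl fun j hj => by rw [(mem_filter.1 hj).2]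
    _ ≤ (1 - 1 / #{k | P k = m}) * ∑ j with P j = m, f j ^ 2 :=
        sum_sq_sign_mul_mean_abs_sub_le _ f
    _ ≤ (1 - ⨅ m, 1 / (#{k | P k = m} : ℝ)) * ∑ j with P j = m, f j ^ 2 := by
        gcongr
        exact ciInf_le (Set.finite_range _).bddBelow m

theorem grouped_signbit_contraction_general (D M₀ : ℕ)
    (P : Fin D → Fin M₀)
    (g : EuclideanSpace ℝ (Fin D)) :
    ‖(show EuclideanSpace ℝ (Fin D) from
        WithLp.toLp 2 (fun j => Real.sign (g j)
          * (∑ k ∈ Finset.univ.filter (fun k => P k = P j), |g k|)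
          / ((Finset.univ.filter (fun k => P k = P j)).card : ℝ))) - g‖ ^ 2
      ≤ (1 - ⨅ m : Fin M₀,
            1 / (((Finset.univ.filter (fun k => P k = m)).card : ℝ))) * ‖g‖ ^ 2 := by
  rw [EuclideanSpace.real_norm_sq_eq, EuclideanSpace.real_norm_sq_eq]
  exact sum_sq_groupwise_sign_mul_mean_abs_sub_le P g

/-- Grouped sign-bit quantization: with group assignment `P : Fin D → Fin M₀`
(every group nonempty), the compressed vector has `j`-th component
`sign(g j) ⬝ (∑_{k : P k = P j} |g k|) / |{k : P k = P j}|`, and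
`‖C(g) − g‖² ≤ (1 − min_m 1/|I_m|)‖g‖²`. -/
theorem grouped_signbit_contraction (D M₀ : ℕ) [NeZero M₀] (hD : 0 < D)
    (P : Fin D → Fin M₀) (hsurj : ∀ m, ∃ j, P j = m)
    (g : EuclideanSpace ℝ (Fin D)) :
    ‖(show EuclideanSpace ℝ (Fin D) from
        WithLp.toLp 2 (fun j => Real.sign (g j)
          * (∑ k ∈ Finset.univ.filter (fun k => P k = P j), |g k|)
          / ((Finset.univ.filter (fun k => P k = P j)).card : ℝ))) - g‖ ^ 2
      ≤ (1 - ⨅ m : Fin M₀,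
            1 / (((Finset.univ.filter (fun k => P k = m)).card : ℝ))) * ‖g‖ ^ 2 :=
  grouped_signbit_contraction_general D M₀ P g
end
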